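/- arXiv:1608.02241 — 10 statements merged into one kernel-verified Lean document; each statement's English description precedes it below -/
import Mathlib

section
/- Let k ≥ 2 be an integer, let B be a finite subset of ℕ × ℕ, let K : ℕ × ℕ → ℕ and T : ℕ × ℕ → ℝ be arbitrary functions. Then it is not the case that for every θ ∈ (0,1), ∑_{(x,y) ∈ B} T(x,y) · K(x,y) · θ^x · (1-θ)^y = θ^{1/k}. -/
/-- No finite sum of terms T(x,y)·K(x,y)·θ^x·(1-θ)^y can equal θ^(1/k)
for all θ ∈ (0,1), where k ≥ 2. -/
theorem stmt_0 (k : ℕ) (hk : 2 ≤ k) (B : Finset (ℕ × ℕ))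
    (K : ℕ × ℕ → ℕ) (T : ℕ × ℕ → ℝ) :
    ¬ ∀ θ : ℝ, θ ∈ Set.Ioo (0 : ℝ) 1 →
      ∑ γ ∈ B, T γ * (K γ : ℝ) * θ ^ γ.1 * (1 - θ) ^ γ.2
        = θ ^ ((1 : ℝ) / k) := by
  intro h
  set P : Polynomial ℝ :=
    ∑ γ ∈ B, Polynomial.C (T γ * (K γ : ℝ)) * Polynomial.X ^ γ.1 *
      (1 - Polynomial.X) ^ γ.2 with hP
  have hkne : (k : ℝ) ≠ 0 := by positivity
  have heval : ∀ θ ∈ Set.Ioo (0 : ℝ) 1, P.eval θ = θ ^ ((1 : ℝ) / k) := by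
    intro θ hθ
    rw [hP]
    simp only [Polynomial.eval_finset_sum, Polynomial.eval_mul, Polynomial.eval_pow,
      Polynomial.eval_C, Polynomial.eval_X, Polynomial.eval_sub, Polynomial.eval_one]
    exact h θ hθ
  have hroot : ∀ θ ∈ Set.Ioo (0 : ℝ) 1, (P ^ k - Polynomial.X).IsRoot θ := by
    intro θ hθ
    have hθ0 : (0 : ℝ) ≤ θ := le_of_lt hθ.1
    simp only [Polynomial.IsRoot, Polynomial.eval_sub, Polynomial.eval_pow,
      Polynomial.eval_X, heval θ hθ]
    rw [← Real.rpow_natCast (θ ^ ((1:ℝ)/k)) k, ← Real.rpow_mul hθ0]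
    rw [one_div_mul_cancel hkne, Real.rpow_one]
    ring
  have hzero : P ^ k - Polynomial.X = 0 := by
    apply Polynomial.eq_zero_of_infinite_isRoot
    apply Set.Infinite.mono (s := Set.Ioo (0:ℝ) 1)
    · exact fun θ hθ => hroot θ hθ
    · exact Set.Ioo_infinite (show (0:ℝ) < 1 by norm_num)
  have hPk : P ^ k = Polynomial.X := by
    have := sub_eq_zero.mp hzero
    exact this
  have hdeg : k * P.natDegree = 1 := by
    have := congrArg Polynomial.natDegree hPk
    rwa [Polynomial.natDegree_pow, Polynomial.natDegree_X] at this
  have := Nat.le_of_dvd one_pos ⟨P.natDegree, hdeg.symm⟩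
  omega
end

section
/- Let k ≥ 2 be an integer, let B be a finite subset of ℕ × ℕ, let K : ℕ × ℕ → ℕ and T : ℕ × ℕ → ℝ be arbitrary functions. Then it is not the case that for every θ ∈ (0,1), ∑_{(x,y) ∈ B} T(x,y) · K(x,y) · θ^x · (1-θ)^y = (1-θ)^{1/k}. -/
/-- No finite sum of terms T(x,y)·K(x,y)·θ^x·(1-θ)^y can equal (1-θ)^(1/k)
for all θ ∈ (0,1), where k ≥ 2. -/
theorem stmt_1 (k : ℕ) (hk : 2 ≤ k) (B : Finset (ℕ × ℕ))
    (K : ℕ × ℕ → ℕ) (T : ℕ × ℕ → ℝ) :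
    ¬ ∀ θ : ℝ, θ ∈ Set.Ioo (0 : ℝ) 1 →
      ∑ γ ∈ B, T γ * (K γ : ℝ) * θ ^ γ.1 * (1 - θ) ^ γ.2
        = (1 - θ) ^ ((1 : ℝ) / k) := by
  intro h
  set p : Polynomial ℝ :=
    ∑ γ ∈ B, Polynomial.C (T γ * (K γ : ℝ)) * Polynomial.X ^ γ.1 *
      (1 - Polynomial.X) ^ γ.2 with hp
  have heval : ∀ θ : ℝ, p.eval θ =
      ∑ γ ∈ B, T γ * (K γ : ℝ) * θ ^ γ.1 * (1 - θ) ^ γ.2 := by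
    intro θ
    simp [hp, Polynomial.eval_finset_sum]
  have hk0 : (k : ℝ) ≠ 0 := by positivity
  have key : ∀ θ ∈ Set.Ioo (0:ℝ) 1, (p ^ k).eval θ = ((1:Polynomial ℝ) - Polynomial.X).eval θ := by
    intro θ hθ
    obtain ⟨h0, h1⟩ := hθ
    have h1θ : (0:ℝ) < 1 - θ := by linarith
    have := h θ ⟨h0, h1⟩
    rw [Polynomial.eval_pow, heval, this]
    rw [← Real.rpow_natCast ((1-θ) ^ ((1:ℝ)/k)) k, ← Real.rpow_mul h1θ.le]
    rw [one_div_mul_cancel hk0, Real.rpow_one]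
    simp
  have hinf : {x : ℝ | (p ^ k).eval x = ((1:Polynomial ℝ) - Polynomial.X).eval x}.Infinite := by
    exact (Set.Ioo_infinite (by norm_num : (0:ℝ) < 1)).mono (fun x hx => key x hx)
  have heq : p ^ k = (1:Polynomial ℝ) - Polynomial.X :=
    Polynomial.eq_of_infinite_eval_eq _ _ hinf
  have hdeg1 : ((1:Polynomial ℝ) - Polynomial.X).natDegree = 1 := by
    have : (1:Polynomial ℝ) - Polynomial.X = -(Polynomial.X - Polynomial.C 1) := by
      simp [Polynomial.C_1]
    rw [this, Polynomial.natDegree_neg, Polynomial.natDegree_X_sub_C]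
  have : (p ^ k).natDegree = k * p.natDegree := Polynomial.natDegree_pow p k
  rw [heq, hdeg1] at this
  have := Nat.eq_one_of_mul_eq_one_right this.symm
  omega
end

section
/- Let k ≥ 2 and n ≥ 1 be integers. There is no function f : ℕ → ℝ such that for every p ∈ (0,1), setting q = 1 - p, one has ∑_{x=0}^{n} f(x) · C(n,x) · (1-q^k)^x · (q^k)^{n-x} = p. -/
open Polynomial

/-- No unbiased estimator of p exists under model (a),
fixed binomial sampling with n pools of size k. -/
theorem stmt_2 (k n : ℕ) (hk : 2 ≤ k) (hn : 1 ≤ n) :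
    ¬ ∃ f : ℕ → ℝ, ∀ p : ℝ, p ∈ Set.Ioo (0 : ℝ) 1 →
      ∑ x ∈ Finset.range (n + 1),
        f x * (n.choose x : ℝ) * (1 - (1 - p) ^ k) ^ x * ((1 - p) ^ k) ^ (n - x)
          = p := by
  rintro ⟨f, hf⟩
  set G : ℝ[X] := ∑ x ∈ Finset.range (n + 1),
    C (f x * (n.choose x : ℝ)) * (1 - X) ^ x * X ^ (n - x) with hG
  set P : ℝ[X] := Polynomial.expand ℝ k G - (1 - X) with hP
  have hroot : ∀ q : ℝ, q ∈ Set.Ioo (0 : ℝ) 1 → P.eval q = 0 := by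
    intro q hq
    have hp : (1 - q) ∈ Set.Ioo (0 : ℝ) 1 := ⟨by linarith [hq.2], by linarith [hq.1]⟩
    have := hf (1 - q) hp
    simp only [show (1 : ℝ) - (1 - q) = q by ring] at this
    have hGeval : G.eval (q ^ k) = 1 - q := by
      rw [hG]
      rw [eval_finset_sum]
      rw [← this]
      apply Finset.sum_congr rfl
      intro x _
      simp [mul_assoc]
    simp [hP, expand_eval, hGeval]
  have hPzero : P = 0 := by
    apply P.eq_zero_of_infinite_isRoot
    apply Set.Infinite.mono (s := Set.Ioo (0:ℝ) 1)
    · intro q hq; exact hroot q hq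
    · exact Set.Ioo_infinite (by norm_num : (0:ℝ) < 1)
  have hc1 : P.coeff 1 = 1 := by
    rw [hP]
    rw [coeff_sub, Polynomial.coeff_expand (by omega : 0 < k)]
    rw [if_neg (fun h => absurd (Nat.le_of_dvd one_pos h) (by omega))]
    simp [coeff_one]
  rw [hPzero] at hc1
  simp at hc1
end

section
/- Let k ≥ 2 and c ≥ 1 be integers. There is no function g : ℕ → ℝ such that for every p ∈ (0,1), setting q = 1 - p, the family y ↦ g(y) · C(c+y-1, y) · (1-q^k)^c · q^{ky} is absolutely summable over y ∈ ℕ with sum equal to p. -/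
/-- No unbiased estimator of p exists under model (b),
inverse binomial sampling until the c-th positive pool. -/
theorem stmt_3 (k c : ℕ) (hk : 2 ≤ k) (hc : 1 ≤ c) :
    ¬ ∃ g : ℕ → ℝ, ∀ p : ℝ, p ∈ Set.Ioo (0 : ℝ) 1 →
      HasSum (fun y : ℕ =>
        g y * ((c + y - 1).choose y : ℝ) * (1 - (1 - p) ^ k) ^ c * (1 - p) ^ (k * y))
        p := by
  rintro ⟨g, hg⟩
  set a : ℕ → ℝ := fun y => g y * ((c + y - 1).choose y : ℝ) with ha
  -- Step 1: boundedness from convergence at p = 1/2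
  have hD : (0:ℝ) < (1 - (1/2 : ℝ) ^ k) ^ c := by
    apply pow_pos
    have : ((1:ℝ)/2) ^ k < 1 := by
      apply pow_lt_one₀ (by norm_num) (by norm_num) (by omega)
    linarith
  set D : ℝ := (1 - (1/2 : ℝ) ^ k) ^ c with hDdef
  have h12 := hg (1/2) ⟨by norm_num, by norm_num⟩
  have hsum12 : Summable (fun y : ℕ => a y * D * (1/2 : ℝ) ^ (k * y)) :=
    h12.summable.congr (fun y => by norm_num [ha, hDdef] <;> ring)
  have htend : Filter.Tendsto (fun y : ℕ => |a y * D * (1/2 : ℝ) ^ (k * y)|)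
      Filter.atTop (nhds 0) := by
    have := hsum12.tendsto_atTop_zero
    simpa using this.abs
  obtain ⟨M, hM'⟩ := htend.bddAbove_range
  have hM : ∀ y : ℕ, |a y * D * (1/2 : ℝ) ^ (k * y)| ≤ M :=
    fun y => hM' (Set.mem_range_self y)
  set B : ℝ := M / D with hBdef
  have hB0 : 0 ≤ B := by
    have := (abs_nonneg _).trans (hM 0)
    positivity
  have hbound : ∀ y : ℕ, |a y| ≤ B * 2 ^ (k * y) := by
    intro y
    have h2k : (0:ℝ) < 2 ^ (k*y) := by positivity
    have h1 : |a y| * D * ((2:ℝ)^(k*y))⁻¹ ≤ M := by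
      have := hM y
      rwa [abs_mul, abs_mul, abs_of_pos hD,
        abs_of_pos (show (0:ℝ) < (1/2)^(k*y) by positivity), one_div, inv_pow] at this
    have h3 : |a y| * D ≤ M * 2^(k*y) := by
      calc |a y| * D = (|a y| * D * ((2:ℝ)^(k*y))⁻¹) * 2^(k*y) := by field_simp
        _ ≤ M * 2^(k*y) := mul_le_mul_of_nonneg_right h1 (le_of_lt h2k)
    rw [hBdef, div_mul_eq_mul_div, le_div_iff₀ hD]
    linarith
  -- Step 2: key estimate
  set C : ℝ := 2 ^ (k+1) * B + |a 0| * c with hCdef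
  have hC0 : 0 ≤ C := by positivity
  have key : ∀ q : ℝ, 0 < q → q ≤ 1/4 → |a 0 - (1 - q)| ≤ C * q ^ 2 := by
    intro q hq0 hq4
    have hq1 : q < 1 := by linarith
    have hqk1 : q ^ k < 1 := pow_lt_one₀ (le_of_lt hq0) hq1 (by omega)
    have hqk0 : 0 ≤ q ^ k := by positivity
    have hs := hg (1 - q) ⟨by linarith, by linarith⟩
    simp only [sub_sub_cancel] at hs
    have hs' : HasSum (fun y : ℕ => a y * (1 - q ^ k) ^ c * q ^ (k * y)) (1 - q) := hs
    have hqk2 : q ^ k ≤ q ^ 2 := pow_le_pow_of_le_one (le_of_lt hq0) (le_of_lt hq1) hk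
    -- split off first term
    have hsum' := hs'.summable
    have heq : (1 - q) = a 0 * (1 - q ^ k) ^ c
        + ∑' y : ℕ, a (y+1) * (1 - q ^ k) ^ c * q ^ (k * (y+1)) := by
      have := Summable.tsum_eq_zero_add hsum'
      rw [hs'.tsum_eq] at this
      simpa using this
    -- bound the tail
    set r : ℝ := (2*q) ^ k with hrdef
    have hr0 : 0 ≤ r := by positivity
    have hr2 : r ≤ 1/2 := by
      rw [hrdef]
      calc (2*q)^k ≤ (1/2:ℝ)^k := by
            apply pow_le_pow_left₀ (by positivity); linarith
        _ ≤ (1/2:ℝ)^2 := pow_le_pow_of_le_one (by norm_num) (by norm_num) hk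
        _ ≤ 1/2 := by norm_num
    have hgeo : HasSum (fun y : ℕ => B * r * r ^ y) (B * r * (1 - r)⁻¹) := by
      exact (hasSum_geometric_of_lt_one hr0 (by linarith)).mul_left _
    have htail : ‖∑' y : ℕ, a (y+1) * (1 - q ^ k) ^ c * q ^ (k * (y+1))‖
        ≤ B * r * (1 - r)⁻¹ := by
      apply tsum_of_norm_bounded hgeo
      intro y
      rw [Real.norm_eq_abs, abs_mul, abs_mul]
      have h1 : |a (y+1)| ≤ B * 2 ^ (k * (y+1)) := hbound (y+1)
      have h2 : |(1 - q^k)^c| ≤ 1 := by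
        rw [abs_of_nonneg (pow_nonneg (by linarith) c)]
        exact pow_le_one₀ (by linarith) (by linarith)
      have h3 : |q ^ (k*(y+1))| = q ^ (k*(y+1)) := abs_of_nonneg (by positivity)
      calc |a (y+1)| * |(1-q^k)^c| * |q^(k*(y+1))|
          ≤ (B * 2^(k*(y+1))) * 1 * q^(k*(y+1)) := by
            apply mul_le_mul
            · exact mul_le_mul h1 h2 (abs_nonneg _) (by positivity)
            · rw [h3]
            · exact abs_nonneg _
            · positivity
        _ = B * (2*q)^(k*(y+1)) := by rw [mul_pow]; ring
        _ = B * r * r ^ y := by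
            rw [hrdef, ← pow_mul]
            rw [show k * (y+1) = k + k * y by ring, pow_add]
            ring
    have hrinv : (1 - r)⁻¹ ≤ 2 := by
      rw [inv_le_comm₀ (by linarith) (by norm_num)]
      linarith
    have hrk : r ≤ 2 ^ k * q ^ 2 := by
      rw [hrdef, mul_pow]
      exact mul_le_mul_of_nonneg_left hqk2 (by positivity)
    have htail2 : |∑' y : ℕ, a (y+1) * (1 - q ^ k) ^ c * q ^ (k * (y+1))|
        ≤ 2 ^ (k+1) * B * q ^ 2 := by
      calc |∑' y : ℕ, a (y+1) * (1 - q ^ k) ^ c * q ^ (k * (y+1))|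
          ≤ B * r * (1 - r)⁻¹ := htail
        _ ≤ B * (2 ^ k * q ^ 2) * 2 := by
            apply mul_le_mul
            · exact mul_le_mul_of_nonneg_left hrk hB0
            · exact hrinv
            · exact inv_nonneg.mpr (by linarith)
            · exact mul_nonneg hB0 (by positivity)
        _ = 2 ^ (k+1) * B * q ^ 2 := by rw [pow_succ]; ring
    -- Bernoulli
    have hbern : 1 - (c : ℝ) * q ^ k ≤ (1 - q ^ k) ^ c := by
      have := one_add_mul_le_pow (a := -(q^k)) (by linarith) c
      calc 1 - (c:ℝ) * q^k = 1 + (c:ℝ) * (-(q^k)) := by ring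
        _ ≤ (1 + -(q^k)) ^ c := this
        _ = (1 - q^k) ^ c := by ring_nf
    have hpc1 : (1 - q ^ k) ^ c ≤ 1 := pow_le_one₀ (by linarith) (by linarith)
    have h4 : |a 0 - a 0 * (1 - q ^ k) ^ c| ≤ |a 0| * c * q ^ 2 := by
      calc |a 0 - a 0 * (1 - q^k)^c| = |a 0| * |1 - (1-q^k)^c| := by
            rw [← abs_mul]; congr 1; ring
        _ ≤ |a 0| * ((c:ℝ) * q ^ 2) := by
            apply mul_le_mul_of_nonneg_left _ (abs_nonneg _)
            rw [abs_of_nonneg (by linarith)]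
            calc 1 - (1-q^k)^c ≤ (c:ℝ) * q^k := by linarith
              _ ≤ (c:ℝ) * q^2 := by
                  apply mul_le_mul_of_nonneg_left hqk2 (by positivity)
        _ = |a 0| * c * q ^ 2 := by ring
    have h5 : |a 0 * (1 - q ^ k) ^ c - (1 - q)| ≤ 2 ^ (k+1) * B * q ^ 2 := by
      have : a 0 * (1 - q ^ k) ^ c - (1 - q)
          = -(∑' y : ℕ, a (y+1) * (1 - q ^ k) ^ c * q ^ (k * (y+1))) := by
        rw [heq]; ring
      rw [this, abs_neg]
      exact htail2
    calc |a 0 - (1 - q)| ≤ |a 0 - a 0 * (1-q^k)^c| + |a 0 * (1-q^k)^c - (1-q)| := by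
          have := abs_sub_le (a 0) (a 0 * (1-q^k)^c) (1-q)
          exact this
      _ ≤ |a 0| * c * q^2 + 2 ^ (k+1) * B * q^2 := add_le_add h4 h5
      _ = C * q ^ 2 := by rw [hCdef]; ring
  -- Step 3: derive contradiction
  set q : ℝ := min (1/4) (1/(8*(C+1))) with hqdef
  have hq0 : 0 < q := by
    apply lt_min (by norm_num)
    positivity
  have hq4 : q ≤ 1/4 := min_le_left _ _
  have hqC : 8 * (C+1) * q ≤ 1 := by
    have h := min_le_right (1/4 : ℝ) (1/(8*(C+1)))
    rw [← hqdef] at h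
    have h8 : (0:ℝ) < 8*(C+1) := by positivity
    calc 8*(C+1)*q ≤ 8*(C+1)*(1/(8*(C+1))) := by
          apply mul_le_mul_of_nonneg_left h (le_of_lt h8)
      _ = 1 := by field_simp
  have k1 := key q hq0 hq4
  have k2 := key (q/2) (by linarith) (by linarith)
  have hCq : C * q ^ 2 ≤ q / 8 := by
    nlinarith [sq_nonneg q, hq0]
  have hCq2 : C * (q/2) ^ 2 ≤ q / 8 := by
    nlinarith [sq_nonneg q, hq0]
  have habs : q / 2 ≤ |a 0 - (1 - q)| + |a 0 - (1 - q/2)| := by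
    have hxy : |(a 0 - (1 - q)) - (a 0 - (1 - q/2))| = q/2 := by
      rw [show (a 0 - (1 - q)) - (a 0 - (1 - q/2)) = q/2 by ring]
      exact abs_of_pos (by linarith)
    calc q / 2 = |(a 0 - (1 - q)) - (a 0 - (1 - q/2))| := hxy.symm
      _ ≤ |a 0 - (1 - q)| + |a 0 - (1 - q/2)| := abs_sub _ _
  have : q / 2 ≤ q/8 + q/8 := le_trans habs (add_le_add (le_trans k1 hCq) (le_trans k2 hCq2))
  linarith
end

section
/- Let c ≥ 1 and k ≥ 1 be integers and let p ∈ (0,1) with q = 1 - p. Define the Degroot estimator D : ℕ → ℝ by D(0) = 0 and D(z) = 1 - ∏_{j=1}^{z} (j + c - 1 - 1/k)/(j + c - 1) for z ≥ 1. Then the family z ↦ D(z) · C(c+z-1, z) · (q^k)^c · (1-q^k)^z is summable over z ∈ ℕ and its sum equals p; i.e., D is an unbiased estimator of p under model (c). -/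
/-!
Put `x = q ^ k` and `y = 1 - x = P(pool positive)`. By the negative binomial series
`∑ multichoose a z * y ^ z = x ^ (-a)`, the probabilities `C(c+z-1, z) x^c y^z` sum to `1`, while
the Degroot product times `C(c+z-1, z)` is `multichoose (c - 1/k) z`, so those weighted
probabilities sum to `x ^ c * x ^ (1/k - c) = q`. The difference of the two series is `1 - q = p`.
-/

namespace Ring

theorem natCast_succ_mul_multichoose_succ {K : Type*} [Field K] [CharZero K] [BinomialRing K]
    (a : K) (n : ℕ) : ((n : K) + 1) * multichoose a (n + 1) = (a + n) * multichoose a n := by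
  have hfac (m : ℕ) : (m.factorial : K) * multichoose a m = (ascPochhammer K m).eval a := by
    rw [← nsmul_eq_mul, factorial_nsmul_multichoose_eq_ascPochhammer,
      Polynomial.ascPochhammer_smeval_eq_eval]
  apply mul_left_cancel₀ (Nat.cast_ne_zero.mpr n.factorial_ne_zero : (n.factorial : K) ≠ 0)
  calc (n.factorial : K) * (((n : K) + 1) * multichoose a (n + 1))
      = ((n + 1).factorial : K) * multichoose a (n + 1) := by
        rw [Nat.factorial_succ]; push_cast; ring
    _ = (ascPochhammer K n).eval a * (a + n) := by
        rw [hfac, ascPochhammer_succ_right]; simp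
    _ = (n.factorial : K) * ((a + n) * multichoose a n) := by rw [← hfac]; ring

end Ring

theorem Real.hasSum_multichoose_mul_pow (a : ℝ) {y : ℝ} (hy : |y| < 1) :
    HasSum (fun n : ℕ => Ring.multichoose a n * y ^ n) ((1 - y) ^ a)⁻¹ := by
  have hball : y ∈ Metric.eball (0 : ℝ) 1 := by
    rw [mem_eball_zero_iff, ← ofReal_norm, Real.norm_eq_abs]
    exact ENNReal.ofReal_lt_one.mpr hy
  have h := (Real.one_div_one_sub_rpow_hasFPowerSeriesOnBall_zero a).hasSum hball
  simpa [FormalMultilinearSeries.ofScalars_apply_eq, Ring.multichoose_eq, mul_comm] using h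

theorem prod_div_mul_choose_eq_multichoose {c : ℕ} (hc : 1 ≤ c) (β : ℝ) (z : ℕ) :
    (∏ j ∈ Finset.Icc 1 z, ((j : ℝ) + c - 1 - β) / ((j : ℝ) + c - 1)) *
      ((c + z - 1).choose z : ℝ) = Ring.multichoose ((c : ℝ) - β) z := by
  induction z with
  | zero => simp
  | succ z ih =>
    have hchoose : ((z : ℝ) + 1) * ((c + (z + 1) - 1).choose (z + 1) : ℝ)
        = ((c : ℝ) + z) * ((c + z - 1).choose z : ℝ) := by
      obtain ⟨d, rfl⟩ : ∃ d, c = d + 1 := ⟨c - 1, by omega⟩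
      rw [show d + 1 + (z + 1) - 1 = d + z + 1 by omega, show d + 1 + z - 1 = d + z by omega]
      have := congrArg (Nat.cast (R := ℝ)) (Nat.add_one_mul_choose_eq (d + z) z)
      push_cast at this ⊢
      linarith
    have hden : ((z : ℝ) + c) ≠ 0 := by positivity
    apply mul_left_cancel₀ (by positivity : ((z : ℝ) + 1) ≠ 0)
    rw [Ring.natCast_succ_mul_multichoose_succ, ← ih, Finset.prod_Icc_succ_top (by omega)]
    generalize ((c + (z + 1) - 1).choose (z + 1) : ℝ) = C' at hchoose ⊢
    generalize ((c + z - 1).choose z : ℝ) = C at hchoose ⊢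
    generalize ∏ j ∈ Finset.Icc 1 z, ((j : ℝ) + c - 1 - β) / ((j : ℝ) + c - 1) = P
    push_cast
    rw [show (z : ℝ) + 1 + c - 1 = z + c by ring]
    field_simp
    linear_combination P * (z + c - β) * hchoose

theorem natCast_choose_eq_multichoose {c : ℕ} (hc : 1 ≤ c) (z : ℕ) :
    ((c + z - 1).choose z : ℝ) = Ring.multichoose (c : ℝ) z := by
  rw [Ring.multichoose_eq, ← Ring.choose_natCast, Nat.cast_sub (by omega)]
  push_cast
  rfl

/-- The Degroot estimator
D(z) = 1 - ∏_{j=1}^z (j + c - 1 - 1/k)/(j + c - 1)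
is an unbiased estimator of p under model (c), inverse binomial sampling until
the c-th negative pool. -/
theorem stmt_4 (c k : ℕ) (hc : 1 ≤ c) (hk : 1 ≤ k) (p : ℝ)
    (hp : p ∈ Set.Ioo (0 : ℝ) 1) :
    HasSum (fun z : ℕ =>
      (1 - ∏ j ∈ Finset.Icc 1 z, ((j : ℝ) + c - 1 - 1 / k) / ((j : ℝ) + c - 1)) *
        ((c + z - 1).choose z : ℝ) * ((1 - p) ^ k) ^ c * (1 - (1 - p) ^ k) ^ z)
      p := by
  obtain ⟨hp0, hp1⟩ := hp
  set q := 1 - p with hq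
  have hq0 : 0 < q := by linarith
  set x := q ^ k
  have hx0 : 0 < x := by positivity
  have hx1 : x < 1 := pow_lt_one₀ hq0.le (by linarith) (by omega)
  have hy : |1 - x| < 1 := abs_lt.mpr ⟨by linarith, by linarith⟩
  have hprob : x ^ c * ((1 - (1 - x)) ^ (c : ℝ))⁻¹ = 1 := by
    rw [sub_sub_cancel, Real.rpow_natCast, mul_inv_cancel₀ (by positivity)]
  have hmean : x ^ c * ((1 - (1 - x)) ^ ((c : ℝ) - 1 / k))⁻¹ = q := by
    rw [sub_sub_cancel, Real.rpow_sub hx0, Real.rpow_natCast, one_div,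
      Real.pow_rpow_inv_natCast hq0.le (by omega)]
    field_simp
  have hsum_pmf := (Real.hasSum_multichoose_mul_pow c hy).mul_left (x ^ c)
  have hsum_prod := (Real.hasSum_multichoose_mul_pow ((c : ℝ) - 1 / k) hy).mul_left (x ^ c)
  rw [hprob] at hsum_pmf
  rw [hmean] at hsum_prod
  have hsum := hsum_pmf.sub hsum_prod
  rw [show 1 - q = p by rw [hq]; ring] at hsum
  refine hsum.congr_fun fun z => ?_
  rw [← prod_div_mul_choose_eq_multichoose hc (1 / k) z, ← natCast_choose_eq_multichoose hc z]
  ring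
end

section
/- Let c ≥ 1 be an integer and let h : ℝ → ℝ be representable on (-1,1) by a power series h(θ) = ∑_{m=0}^∞ b_m θ^m with radius of convergence at least 1. Define f(θ) = h(θ)/(1-θ)^c and ĥ(w) = ((c-1)!/(w+c-1)!) · f^{(w)}(0), where f^{(w)}(0) is the w-th derivative of f at 0. Then for every θ ∈ (0,1), the family w ↦ ĥ(w) · C(w+c-1, w) · (1-θ)^c · θ^w is summable over w ∈ ℕ and its sum equals h(θ). -/
/-!
Writing `h(θ) = ∑ bₘ θᵐ` and `(1 - θ)^{-c} = ∑ C(n + c - 1, c - 1) θⁿ`, the Cauchy product gives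
`f(θ) = h(θ) / (1 - θ)^c = ∑ aₙ θⁿ` on `(-1, 1)`, so `f` is analytic at `0` with
`f⁽ʷ⁾(0) = w! a_w`. The factorials then cancel the binomial coefficient, `ĥ(w) C(w + c - 1, w) = a_w`,
and the expectation `∑ a_w (1 - θ)^c θ^w = f(θ) (1 - θ)^c = h(θ)`.
-/

open Finset Nat NNReal ENNReal

namespace FormalMultilinearSeries

theorem le_radius_ofScalars_of_summable {a : ℕ → ℝ} {r : ℝ≥0}
    (h : Summable fun n => a n * (r : ℝ) ^ n) : (r : ℝ≥0∞) ≤ (ofScalars ℝ a).radius := by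
  refine le_radius_of_tendsto _ (l := 0) ?_
  simpa [ofScalars_norm, abs_mul] using h.tendsto_atTop_zero.norm

theorem le_radius_ofScalars_of_forall_summable {a : ℕ → ℝ} {r : ℝ≥0}
    (h : ∀ t : ℝ, |t| < r → Summable fun n => a n * t ^ n) :
    (r : ℝ≥0∞) ≤ (ofScalars ℝ a).radius :=
  ENNReal.le_of_forall_nnreal_lt fun s hs =>
    le_radius_ofScalars_of_summable (h s (by simpa using hs))

end FormalMultilinearSeries

open FormalMultilinearSeries

theorem summable_norm_mul_pow_of_forall_summable {a : ℕ → ℝ} {r : ℝ≥0}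
    (h : ∀ t : ℝ, |t| < r → Summable fun n => a n * t ^ n) {t : ℝ} (ht : |t| < r) :
    Summable fun n => ‖a n * t ^ n‖ := by
  have hlt : ((‖t‖₊ : ℝ≥0) : ℝ≥0∞) < (ofScalars ℝ a).radius :=
    lt_of_lt_of_le (by exact_mod_cast ht) (le_radius_ofScalars_of_forall_summable h)
  simpa [ofScalars_norm, norm_mul] using (ofScalars ℝ a).summable_norm_mul_pow hlt

theorem hasFPowerSeriesOnBall_ofScalars_of_hasSum {g : ℝ → ℝ} {a : ℕ → ℝ} {r : ℝ≥0}
    (hr : 0 < r) (h : ∀ t : ℝ, |t| < r → HasSum (fun n => a n * t ^ n) (g t)) :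
    HasFPowerSeriesOnBall g (ofScalars ℝ a) 0 r where
  r_le := le_radius_ofScalars_of_forall_summable fun t ht => (h t ht).summable
  r_pos := by exact_mod_cast hr
  hasSum {y} hy := by
    have hy' : |y| < r := by simpa [edist_zero_right] using hy
    simpa [ofScalars_apply_eq, smul_eq_mul, mul_comm] using h y hy'

theorem iteratedDeriv_zero_eq_of_hasSum {g : ℝ → ℝ} {a : ℕ → ℝ} {r : ℝ≥0}
    (hr : 0 < r) (h : ∀ t : ℝ, |t| < r → HasSum (fun n => a n * t ^ n) (g t)) (n : ℕ) :
    iteratedDeriv n g 0 = n ! * a n := by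
  have := (hasFPowerSeriesOnBall_ofScalars_of_hasSum hr h).factorial_smul 1 n
  simpa [← iteratedDeriv_eq_iteratedFDeriv, ofScalars_apply_eq] using this.symm

theorem hasSum_sum_antidiagonal_mul_pow {a b : ℕ → ℝ} {t A B : ℝ}
    (ha : HasSum (fun n => a n * t ^ n) A) (hb : HasSum (fun n => b n * t ^ n) B)
    (ha' : Summable fun n => ‖a n * t ^ n‖) (hb' : Summable fun n => ‖b n * t ^ n‖) :
    HasSum (fun n => (∑ p ∈ antidiagonal n, a p.1 * b p.2) * t ^ n) (A * B) := by
  have hprod := (summable_norm_sum_mul_antidiagonal_of_summable_norm ha' hb').of_norm.hasSum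
  rw [← tsum_mul_tsum_eq_tsum_sum_antidiagonal_of_summable_norm ha' hb', ha.tsum_eq,
    hb.tsum_eq] at hprod
  refine hprod.congr_fun fun n => ?_
  rw [sum_mul]
  refine sum_congr rfl fun p hp => ?_
  rw [← mem_antidiagonal.1 hp, pow_add]
  ring

/-- The Taylor coefficients of `θ ↦ h(θ) / (1 - θ)^(d + 1)` when `h(θ) = ∑ bₘ θᵐ`. -/
def coeffDivOneSubPow (b : ℕ → ℝ) (d n : ℕ) : ℝ :=
  ∑ p ∈ antidiagonal n, b p.1 * ((p.2 + d).choose d : ℝ)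

theorem hasSum_coeffDivOneSubPow_mul_pow {h : ℝ → ℝ} {b : ℕ → ℝ} (d : ℕ)
    (hb : ∀ t : ℝ, |t| < 1 → HasSum (fun m => b m * t ^ m) (h t)) {t : ℝ} (ht : |t| < 1) :
    HasSum (fun n => coeffDivOneSubPow b d n * t ^ n) (h t / (1 - t) ^ (d + 1)) := by
  have hgeom : ∀ s : ℝ, |s| < 1 →
      HasSum (fun n => ((n + d).choose d : ℝ) * s ^ n) (1 / (1 - s) ^ (d + 1)) := fun s hs =>
    hasSum_choose_mul_geometric_of_norm_lt_one d (by rwa [Real.norm_eq_abs])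
  have habs {a : ℕ → ℝ} {g : ℝ → ℝ}
      (ha : ∀ s : ℝ, |s| < 1 → HasSum (fun n => a n * s ^ n) (g s)) :
      Summable fun n => ‖a n * t ^ n‖ :=
    summable_norm_mul_pow_of_forall_summable (r := 1)
      (fun s hs => (ha s (by simpa using hs)).summable) (by simpa using ht)
  have key := hasSum_sum_antidiagonal_mul_pow (hb t ht) (hgeom t ht) (habs hb) (habs hgeom)
  rwa [mul_one_div] at key

theorem factorial_div_factorial_mul_choose (d w : ℕ) :
    (d ! : ℝ) / (w + d)! * w ! * (w + d).choose w = 1 := by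
  have hchoose : ((w + d).choose w : ℝ) * w ! * d ! = (w + d)! := by
    rw [Nat.choose_symm_add]
    exact_mod_cast Nat.add_choose_mul_factorial_mul_factorial w d
  have hne : ((w + d)! : ℝ) ≠ 0 := by positivity
  field_simp
  linear_combination hchoose

/-- Sufficiency direction of Degroot's theorem: if h is given by a
power series converging on (-1,1), then ĥ(w) = ((c-1)!/(w+c-1)!)·f⁽ʷ⁾(0), with
f(θ) = h(θ)/(1-θ)^c, is an unbiased estimator of h(θ) under negative binomial
sampling. -/
theorem stmt_5 (c : ℕ) (hc : 1 ≤ c) (h : ℝ → ℝ) (b : ℕ → ℝ)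
    (hb : ∀ θ : ℝ, θ ∈ Set.Ioo (-1 : ℝ) 1 → HasSum (fun m : ℕ => b m * θ ^ m) (h θ)) :
    ∀ θ : ℝ, θ ∈ Set.Ioo (0 : ℝ) 1 →
      HasSum (fun w : ℕ =>
        (((c - 1).factorial : ℝ) / ((w + c - 1).factorial : ℝ) *
            iteratedDeriv w (fun t : ℝ => h t / (1 - t) ^ c) 0) *
          ((w + c - 1).choose w : ℝ) * (1 - θ) ^ c * θ ^ w)
        (h θ) := by
  obtain ⟨d, rfl⟩ := Nat.exists_eq_add_of_le' hc
  intro θ ⟨hθ0, hθ1⟩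
  have hb' : ∀ t : ℝ, |t| < 1 → HasSum (fun m => b m * t ^ m) (h t) :=
    fun t ht => hb t (abs_lt.1 ht)
  have hf (t : ℝ) (ht : |t| < 1) := hasSum_coeffDivOneSubPow_mul_pow d hb' ht
  have hderiv (w : ℕ) :
      iteratedDeriv w (fun t => h t / (1 - t) ^ (d + 1)) 0 = w ! * coeffDivOneSubPow b d w :=
    iteratedDeriv_zero_eq_of_hasSum one_pos (fun t ht => hf t (by simpa using ht)) w
  have hsum := (hf θ (abs_lt.2 ⟨by linarith, hθ1⟩)).mul_right ((1 - θ) ^ (d + 1))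
  rw [div_mul_cancel₀ _ (pow_ne_zero _ (sub_ne_zero.2 hθ1.ne'))] at hsum
  refine hsum.congr_fun fun w => ?_
  have hcancel := factorial_div_factorial_mul_choose d w
  simp only [hderiv, Nat.add_sub_cancel, ← add_assoc]
  linear_combination coeffDivOneSubPow b d w * (1 - θ) ^ (d + 1) * θ ^ w * hcancel
end

section
/- Let c ≥ 1 be an integer, let g : ℕ → ℝ, and let h : (0,1) → ℝ. Suppose that for every θ ∈ (0,1) the family w ↦ g(w) · C(w+c-1, w) · (1-θ)^c · θ^w is absolutely summable over w ∈ ℕ with sum h(θ). Then there exists a sequence (b_m) of reals such that the power series ∑_{m=0}^∞ b_m θ^m converges for every θ ∈ (-1,1) and its sum equals h(θ) for every θ ∈ (0,1). -/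
/-- Necessity direction of Degroot's theorem: any function h on (0,1)
admitting an unbiased estimator under negative binomial sampling is the restriction
of a power series converging on (-1,1). -/
theorem stmt_6 (c : ℕ) (hc : 1 ≤ c) (g : ℕ → ℝ) (h : ℝ → ℝ)
    (hg : ∀ θ : ℝ, θ ∈ Set.Ioo (0 : ℝ) 1 →
      HasSum (fun w : ℕ =>
        g w * ((w + c - 1).choose w : ℝ) * (1 - θ) ^ c * θ ^ w) (h θ)) :
    ∃ b : ℕ → ℝ,
      (∀ θ : ℝ, θ ∈ Set.Ioo (-1 : ℝ) 1 → Summable (fun m : ℕ => b m * θ ^ m)) ∧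
      (∀ θ : ℝ, θ ∈ Set.Ioo (0 : ℝ) 1 → HasSum (fun m : ℕ => b m * θ ^ m) (h θ)) := by
  classical
  set a : ℕ → ℝ := fun w => g w * ((w + c - 1).choose w : ℝ) with ha
  -- Step 1: summability of the base power series on (-1,1)
  have key : ∀ θ : ℝ, |θ| < 1 → Summable (fun w : ℕ => a w * θ ^ w) := by
    intro θ hθ
    have habs : 0 ≤ |θ| := abs_nonneg θ
    obtain ⟨r, hr0, hθr, hr1⟩ : ∃ r : ℝ, 0 < r ∧ |θ| < r ∧ r < 1 :=
      ⟨(1 + |θ|) / 2, by linarith, by linarith, by linarith⟩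
    have hs := (hg r ⟨hr0, hr1⟩).summable
    have h1r : (0 : ℝ) < 1 - r := by linarith
    have hne : ((1 - r) ^ c : ℝ) ≠ 0 := by positivity
    have hs2 : Summable (fun w : ℕ => a w * r ^ w) := by
      have h2 := hs.mul_right (((1 - r) ^ c)⁻¹)
      refine h2.congr fun w => ?_
      field_simp [ha]
      ring
    obtain ⟨M, hM⟩ := (hs2.tendsto_atTop_zero.abs).bddAbove_range
    have hMb : ∀ w : ℕ, |a w * r ^ w| ≤ M := fun w => hM ⟨w, rfl⟩
    have hq0 : 0 ≤ |θ| / r := by positivity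
    have hq1 : |θ| / r < 1 := by rw [div_lt_one hr0]; exact hθr
    have hgeo : Summable (fun w : ℕ => M * (|θ| / r) ^ w) :=
      (summable_geometric_of_lt_one hq0 hq1).mul_left M
    refine Summable.of_abs (Summable.of_nonneg_of_le (fun w => abs_nonneg _)
      (fun w => ?_) hgeo)
    have hrw : (r : ℝ) ^ w ≠ 0 := by positivity
    have heq : |a w * θ ^ w| = |a w * r ^ w| * (|θ| / r) ^ w := by
      rw [abs_mul (a w), abs_mul (a w), abs_pow, abs_pow, abs_of_pos hr0, div_pow,
        mul_assoc, mul_comm (r ^ w), div_mul_cancel₀ _ hrw]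
    rw [heq]
    exact mul_le_mul_of_nonneg_right (hMb w) (by positivity)
  -- the coefficient sequence
  set b : ℕ → ℝ := fun m => ∑ j ∈ Finset.range (c + 1),
      (if j ≤ m then (-1 : ℝ) ^ j * (c.choose j : ℝ) * a (m - j) else 0) with hb
  -- Step 2: the series for b sums to (1-θ)^c * S on (-1,1)
  have main : ∀ θ : ℝ, |θ| < 1 →
      HasSum (fun m : ℕ => b m * θ ^ m) ((1 - θ) ^ c * ∑' w, a w * θ ^ w) := by
    intro θ hθ
    have hS := (key θ hθ).hasSum
    set S : ℝ := ∑' w, a w * θ ^ w with hSdef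
    have each : ∀ j ∈ Finset.range (c + 1),
        HasSum (fun m : ℕ =>
            (if j ≤ m then (-1 : ℝ) ^ j * (c.choose j : ℝ) * a (m - j) else 0) * θ ^ m)
          ((-1 : ℝ) ^ j * (c.choose j : ℝ) * θ ^ j * S) := by
      intro j _
      have h1 : HasSum (fun w : ℕ =>
          (-1 : ℝ) ^ j * (c.choose j : ℝ) * θ ^ j * (a w * θ ^ w))
          ((-1 : ℝ) ^ j * (c.choose j : ℝ) * θ ^ j * S) := hS.mul_left _
      have hinj : Function.Injective (fun w : ℕ => w + j) := fun x y hxy => by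
        simpa using hxy
      refine (hinj.hasSum_iff ?_).mp ?_
      · intro x hx
        have hx' : ¬ j ≤ x := by
          intro hjx
          exact hx ⟨x - j, by simp; omega⟩
        simp [hx']
      · have hcomp : ((fun m : ℕ =>
            (if j ≤ m then (-1 : ℝ) ^ j * (c.choose j : ℝ) * a (m - j) else 0) * θ ^ m) ∘
              fun w : ℕ => w + j) =
            fun w : ℕ => (-1 : ℝ) ^ j * (c.choose j : ℝ) * θ ^ j * (a w * θ ^ w) := by
          funext w
          simp only [Function.comp_apply]
          rw [if_pos (by omega : j ≤ w + j)]
          have hw : w + j - j = w := by omega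
          rw [hw, pow_add]
          ring
        rw [hcomp]
        exact h1
    have hsum := hasSum_sum each
    have hpow : ∑ j ∈ Finset.range (c + 1),
        (-1 : ℝ) ^ j * (c.choose j : ℝ) * θ ^ j * S = (1 - θ) ^ c * S := by
      rw [← Finset.sum_mul]
      congr 1
      have : (1 - θ) ^ c = (-θ + 1) ^ c := by ring_nf
      rw [this, add_pow]
      refine Finset.sum_congr rfl fun j _ => ?_
      rw [neg_pow]
      ring
    rw [hpow] at hsum
    have hfun : (fun m : ℕ => b m * θ ^ m) = fun m : ℕ =>
        ∑ j ∈ Finset.range (c + 1),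
          (if j ≤ m then (-1 : ℝ) ^ j * (c.choose j : ℝ) * a (m - j) else 0) * θ ^ m := by
      funext m
      rw [hb, Finset.sum_mul]
    rw [hfun]
    exact hsum
  refine ⟨b, ?_, ?_⟩
  · intro θ hθ
    exact (main θ (abs_lt.mpr ⟨hθ.1, hθ.2⟩)).summable
  · intro θ hθ
    obtain ⟨hθ0, hθ1⟩ := hθ
    have habs : |θ| < 1 := abs_lt.mpr ⟨by linarith, hθ1⟩
    have hm := main θ habs
    have h1θ : (0 : ℝ) < 1 - θ := by linarith
    have hne : ((1 - θ) ^ c : ℝ) ≠ 0 := by positivity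
    have hS : HasSum (fun w : ℕ => a w * θ ^ w) (((1 - θ) ^ c)⁻¹ * h θ) := by
      have h2 := (hg θ ⟨hθ0, hθ1⟩).mul_left (((1 - θ) ^ c)⁻¹)
      have heq : (fun w : ℕ =>
          ((1 - θ) ^ c)⁻¹ * (g w * ((w + c - 1).choose w : ℝ) * (1 - θ) ^ c * θ ^ w)) =
          fun w : ℕ => a w * θ ^ w := by
        funext w
        field_simp [ha]
        ring
      exact heq ▸ h2
    rw [hS.tsum_eq, ← mul_assoc, mul_inv_cancel₀ hne, one_mul] at hm
    exact hm
end

section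
/- Let c ≥ 1 be an integer and let g, g' : ℕ → ℝ. Suppose that for every θ ∈ (0,1) both families w ↦ g(w) · C(w+c-1, w) · (1-θ)^c · θ^w and w ↦ g'(w) · C(w+c-1, w) · (1-θ)^c · θ^w are absolutely summable over w ∈ ℕ and have equal sums. Then g(w) = g'(w) for all w ∈ ℕ. -/
/-!
After dividing by `(1 - θ) ^ c`, unbiasedness of `g` and `g'` says that the power series with
coefficients `g w * C(w + c - 1, w)` and `g' w * C(w + c - 1, w)` have the same sum on `(0, 1)`.
A power series vanishing at points accumulating at `0` has vanishing coefficients (isolated zeros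
of analytic functions), and `C(w + c - 1, w) ≠ 0` because `c ≥ 1`.
-/

open Filter Topology FormalMultilinearSeries

variable {𝕜 : Type*} [NontriviallyNormedField 𝕜] [CompleteSpace 𝕜]

theorem eq_zero_of_frequently_hasSum_mul_pow_zero {a : ℕ → 𝕜}
    (h : ∃ᶠ x in 𝓝[≠] (0 : 𝕜), HasSum (fun n => a n * x ^ n) 0) : a = 0 := by
  obtain ⟨x₀, hx₀, hx₀_ne⟩ := (h.and_eventually self_mem_nhdsWithin).exists
  set p := ofScalars 𝕜 a
  have hradius : (‖x₀‖₊ : ENNReal) ≤ p.radius := by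
    refine p.le_radius_of_tendsto (l := 0) ?_
    simpa [p, norm_mul, norm_pow] using hx₀.summable.tendsto_atTop_zero.norm
  have hpos : (0 : ENNReal) < p.radius :=
    lt_of_lt_of_le (by simpa using hx₀_ne) hradius
  have hp : HasFPowerSeriesAt p.sum p 0 := (p.hasFPowerSeriesOnBall hpos).hasFPowerSeriesAt
  by_contra ha
  have hne := hp.locally_ne_zero ((ofScalars_series_eq_zero (E := 𝕜)).not.mpr ha)
  refine (h.and_eventually hne).exists.elim fun x ⟨hx, hx_ne⟩ => hx_ne ?_
  rw [show p.sum x = ∑' n, a n • x ^ n from congrFun (ofScalarsSum_eq_tsum a) x]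
  exact hx.tsum_eq

theorem eq_of_frequently_hasSum_mul_pow_eq {a b : ℕ → 𝕜}
    (h : ∃ᶠ x in 𝓝[≠] (0 : 𝕜), ∃ s, HasSum (fun n => a n * x ^ n) s ∧
      HasSum (fun n => b n * x ^ n) s) : a = b := by
  refine sub_eq_zero.mp (eq_zero_of_frequently_hasSum_mul_pow_zero (h.mono ?_))
  rintro x ⟨s, ha, hb⟩
  simpa [sub_mul] using ha.sub hb

/-- Uniqueness part of Degroot's theorem: two unbiased estimators of
the same function under negative binomial sampling must coincide. -/
theorem stmt_7 (c : ℕ) (hc : 1 ≤ c) (g g' : ℕ → ℝ)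
    (hgg' : ∀ θ : ℝ, θ ∈ Set.Ioo (0 : ℝ) 1 → ∃ s : ℝ,
      HasSum (fun w : ℕ =>
        g w * ((w + c - 1).choose w : ℝ) * (1 - θ) ^ c * θ ^ w) s ∧
      HasSum (fun w : ℕ =>
        g' w * ((w + c - 1).choose w : ℝ) * (1 - θ) ^ c * θ ^ w) s) :
    ∀ w : ℕ, g w = g' w := by
  have hchoose_ne (w : ℕ) : ((w + c - 1).choose w : ℝ) ≠ 0 :=
    Nat.cast_ne_zero.mpr (Nat.choose_pos (by omega)).ne'
  have hunbiased : ∀ᶠ θ in 𝓝[>] (0 : ℝ), ∃ s,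
      HasSum (fun w => g w * ((w + c - 1).choose w : ℝ) * θ ^ w) s ∧
      HasSum (fun w => g' w * ((w + c - 1).choose w : ℝ) * θ ^ w) s := by
    filter_upwards [Ioo_mem_nhdsGT (zero_lt_one' ℝ)] with θ hθ
    obtain ⟨s, hg, hg'⟩ := hgg' θ hθ
    have hpow : (1 - θ) ^ c ≠ 0 := pow_ne_zero _ (sub_ne_zero.mpr hθ.2.ne')
    have hdiv (f : ℕ → ℝ) (hf : HasSum (fun w => f w * (1 - θ) ^ c * θ ^ w) s) :
        HasSum (fun w => f w * θ ^ w) (s / (1 - θ) ^ c) := by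
      have hcancel :
          (fun w => f w * (1 - θ) ^ c * θ ^ w / (1 - θ) ^ c) = fun w => f w * θ ^ w := by
        funext w
        field_simp
      exact hcancel ▸ hf.div_const ((1 - θ) ^ c)
    exact ⟨s / (1 - θ) ^ c, hdiv _ hg, hdiv _ hg'⟩
  have hcoeff := eq_of_frequently_hasSum_mul_pow_eq
    (hunbiased.frequently.filter_mono (nhdsGT_le_nhdsNE 0))
  exact fun w => mul_right_cancel₀ (hchoose_ne w) (congrFun hcoeff w)
end

section
/- Let k ≥ 1 and c ≥ 1 be integers and let p ∈ (0,1) with q = 1 - p. For y ∈ ℕ let ℓ(p, y) = c · log(1 - (1-p)^k) + k·y·log(1-p). Then ∑_{y=0}^∞ C(c+y-1, y) · (1-q^k)^c · q^{ky} · (−∂²ℓ/∂p²)(p, y) = c k² q^{k-2} / (1 - q^k)², where ∂²ℓ/∂p² denotes the second derivative of ℓ(·, y) with respect to p. -/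
/-!
Writing `q = 1 - p`, the observed information `-∂²ℓ/∂p²` is affine in `y`: it equals
`c k q^k (k - 1 + q^k) / (q² (1 - q^k)²) + k y / q²`. Its expectation under the negative binomial
law with success probability `1 - q^k` is therefore obtained from the total mass `1` and the mean
`c q^k / (1 - q^k)`, and the two terms combine to `c k² q^k / (q² (1 - q^k)²)`.
-/

open Filter Topology

-- For `c = 0` the truncated subtraction makes this the point mass at `0`.
noncomputable def negBinomialWeight (c : ℕ) (r : ℝ) (y : ℕ) : ℝ :=
  ((c + y - 1).choose y : ℝ) * (1 - r) ^ c * r ^ y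

theorem hasSum_negBinomialWeight (c : ℕ) {r : ℝ} (hr : |r| < 1) :
    HasSum (negBinomialWeight c r) 1 := by
  rcases c with _ | m
  · convert hasSum_ite_eq 0 (1 : ℝ) with y
    rcases y with _ | y <;> simp [negBinomialWeight]
  · have hr1 : 1 - r ≠ 0 := by linarith [le_abs_self r]
    have h := (hasSum_choose_mul_geometric_of_norm_lt_one m (r := r) hr).mul_left
      ((1 - r) ^ (m + 1))
    rw [mul_one_div_cancel (pow_ne_zero _ hr1)] at h
    refine h.congr_fun fun y => ?_
    rw [negBinomialWeight, show m + 1 + y - 1 = y + m by omega, Nat.choose_symm_add]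
    ring

theorem negBinomialWeight_succ_mul (c : ℕ) {r : ℝ} (hr : r ≠ 1) (y : ℕ) :
    ((y + 1 : ℕ) : ℝ) * negBinomialWeight c r (y + 1) =
      c * r / (1 - r) * negBinomialWeight (c + 1) r y := by
  have hr1 : 1 - r ≠ 0 := sub_ne_zero.mpr hr.symm
  have hchoose : ((c + y).choose (y + 1) * (y + 1) : ℝ) = (c + y).choose y * c := by
    exact_mod_cast (Nat.choose_succ_right_eq (c + y) y).trans (by rw [Nat.add_sub_cancel])
  simp only [negBinomialWeight, show c + (y + 1) - 1 = c + y by omega,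
    show c + 1 + y - 1 = c + y by omega]
  calc _ = ((c + y).choose (y + 1) * (y + 1) : ℝ) * ((1 - r) ^ c * r ^ y * r) := by
        push_cast; ring
    _ = (c + y).choose y * c * ((1 - r) ^ c * r ^ y * r) := by rw [hchoose]
    _ = _ := by field_simp; ring

theorem hasSum_mul_negBinomialWeight (c : ℕ) {r : ℝ} (hr : |r| < 1) :
    HasSum (fun y : ℕ => (y : ℝ) * negBinomialWeight c r y) (c * r / (1 - r)) := by
  have hr1 : r ≠ 1 := by rintro rfl; simp at hr
  have hshift : HasSum (fun y : ℕ => ((y + 1 : ℕ) : ℝ) * negBinomialWeight c r (y + 1))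
      (c * r / (1 - r)) := by
    rw [funext (negBinomialWeight_succ_mul c hr1)]
    simpa using (hasSum_negBinomialWeight (c + 1) hr).mul_left (c * r / (1 - r))
  simpa using
    (hasSum_nat_add_iff (f := fun y : ℕ => (y : ℝ) * negBinomialWeight c r y) 1).mp hshift

theorem iteratedDeriv_two_eq_of_hasDerivAt {f f' : ℝ → ℝ} {x a : ℝ}
    (hf : ∀ᶠ t in 𝓝 x, HasDerivAt f (f' t) t) (hf' : HasDerivAt f' a x) :
    iteratedDeriv 2 f x = a := by
  have h : deriv f =ᶠ[𝓝 x] f' := hf.mono fun t ht => ht.deriv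
  rw [iteratedDeriv_succ, iteratedDeriv_one, h.deriv_eq, hf'.deriv]

-- The derivative is written without `x ^ (n - 1)`, keeping truncated subtraction out of the
-- second-derivative computation below.
theorem hasDerivAt_pow_of_ne_zero (n : ℕ) {x : ℝ} (hx : x ≠ 0) :
    HasDerivAt (fun x : ℝ => x ^ n) (n * x ^ n / x) x := by
  refine (hasDerivAt_pow n x).congr_deriv ?_
  rcases n with _ | n
  · simp
  · rw [Nat.add_sub_cancel, pow_succ]
    field_simp

theorem neg_iteratedDeriv_two_logLik (a b : ℝ) (k : ℕ) {q : ℝ} (hq : q ≠ 0)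
    (hqk : q ^ k ≠ 1) :
    -iteratedDeriv 2 (fun s => a * Real.log (1 - s ^ k) + b * Real.log s) q =
      a * k * q ^ k * (k - 1 + q ^ k) / (q ^ 2 * (1 - q ^ k) ^ 2) + b / q ^ 2 := by
  have hderiv : ∀ s : ℝ, s ≠ 0 → s ^ k ≠ 1 → HasDerivAt
      (fun s => a * Real.log (1 - s ^ k) + b * Real.log s)
      (a * (-(k * s ^ k / s) / (1 - s ^ k)) + b * s⁻¹) s := fun s hs hsk =>
    (((hasDerivAt_pow_of_ne_zero k hs).const_sub 1).log (sub_ne_zero.mpr hsk.symm)).const_mul a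
      |>.add ((Real.hasDerivAt_log hs).const_mul b)
  have hnear : ∀ᶠ s in 𝓝 q, s ≠ 0 ∧ s ^ k ≠ 1 :=
    (eventually_ne_nhds hq).and ((continuous_pow k).continuousAt.eventually_ne hqk)
  have hpow := hasDerivAt_pow_of_ne_zero k hq
  have hqk' : 1 - q ^ k ≠ 0 := sub_ne_zero.mpr hqk.symm
  have h2 := (((((hpow.const_mul (k : ℝ)).div (hasDerivAt_id' q) hq).neg).div
    (hpow.const_sub 1) hqk').const_mul a).add ((hasDerivAt_inv hq).const_mul b)
  rw [iteratedDeriv_two_eq_of_hasDerivAt (hnear.mono fun s hs => hderiv s hs.1 hs.2) h2]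
  simp only [Pi.neg_apply, Pi.div_apply]
  field_simp
  ring

theorem neg_iteratedDeriv_two_logLik_comp_one_sub (a b : ℝ) (k : ℕ) {p : ℝ}
    (hp : 1 - p ≠ 0) (hpk : (1 - p) ^ k ≠ 1) :
    -iteratedDeriv 2 (fun t => a * Real.log (1 - (1 - t) ^ k) + b * Real.log (1 - t)) p =
      a * k * (1 - p) ^ k * (k - 1 + (1 - p) ^ k) / ((1 - p) ^ 2 * (1 - (1 - p) ^ k) ^ 2) +
        b / (1 - p) ^ 2 := by
  rw [← neg_iteratedDeriv_two_logLik a b k hp hpk,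
    iteratedDeriv_comp_const_sub 2 (fun s => a * Real.log (1 - s ^ k) + b * Real.log s) 1]
  simp

theorem stmt_12_general (k c : ℕ) (hk : 1 ≤ k) (p : ℝ)
    (hp : p ∈ Set.Ioo (0 : ℝ) 1) :
    HasSum (fun y : ℕ =>
      ((c + y - 1).choose y : ℝ) * (1 - (1 - p) ^ k) ^ c * (1 - p) ^ (k * y) *
        (- iteratedDeriv 2
            (fun t : ℝ => c * Real.log (1 - (1 - t) ^ k) + k * y * Real.log (1 - t)) p))
      ((c : ℝ) * k ^ 2 * (1 - p) ^ ((k : ℝ) - 2) / (1 - (1 - p) ^ k) ^ 2) := by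
  obtain ⟨hp0, hp1⟩ := hp
  set q := 1 - p
  have hq0 : 0 < q := by linarith
  have hqk : q ^ k < 1 := pow_lt_one₀ hq0.le (by linarith) (by omega)
  have hr : |q ^ k| < 1 := by rwa [abs_of_pos (pow_pos hq0 k)]
  have hfisher := ((hasSum_negBinomialWeight c hr).mul_left
      (c * k * q ^ k * (k - 1 + q ^ k) / (q ^ 2 * (1 - q ^ k) ^ 2))).add
    ((hasSum_mul_negBinomialWeight c hr).mul_left (k / q ^ 2))
  have hqk' : 1 - q ^ k ≠ 0 := by linarith
  have hvalue : (c : ℝ) * k ^ 2 * q ^ ((k : ℝ) - 2) / (1 - q ^ k) ^ 2 =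
      c * k * q ^ k * (k - 1 + q ^ k) / (q ^ 2 * (1 - q ^ k) ^ 2) * 1 +
        k / q ^ 2 * (c * q ^ k / (1 - q ^ k)) := by
    rw [Real.rpow_sub hq0, Real.rpow_natCast, Real.rpow_two]
    field_simp
    ring
  rw [hvalue]
  refine hfisher.congr_fun fun y => ?_
  rw [neg_iteratedDeriv_two_logLik_comp_one_sub _ _ k hq0.ne' hqk.ne, negBinomialWeight,
    pow_mul]
  ring

/-- Fisher information under model (b):
E[-∂²ℓ/∂p²] = c k² q^(k-2)/(1-q^k)², where q = 1 - p and
ℓ(p,y) = c·log(1-(1-p)^k) + k·y·log(1-p). -/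
theorem stmt_12 (k c : ℕ) (hk : 1 ≤ k) (hc : 1 ≤ c) (p : ℝ)
    (hp : p ∈ Set.Ioo (0 : ℝ) 1) :
    HasSum (fun y : ℕ =>
      ((c + y - 1).choose y : ℝ) * (1 - (1 - p) ^ k) ^ c * (1 - p) ^ (k * y) *
        (- iteratedDeriv 2
            (fun t : ℝ => c * Real.log (1 - (1 - t) ^ k) + k * y * Real.log (1 - t)) p))
      ((c : ℝ) * k ^ 2 * (1 - p) ^ ((k : ℝ) - 2) / (1 - (1 - p) ^ k) ^ 2) :=
  stmt_12_general k c hk p hp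
end

section
/- Let k ≥ 1 and c ≥ 1 be integers and let p ∈ (0,1) with q = 1 - p. For y ∈ ℕ let ℓ(p, y) = c · log(1 - (1-p)^k) + k·y·log(1-p). Then ∑_{y=0}^∞ C(c+y-1, y) · (1-q^k)^c · q^{ky} · (∂³ℓ/∂p³)(p, y) = (ck/q³) · ( (k(k+1) q^k (1-q^k) + 2(k q^k + q^k - 1)²)/(1-q^k)³ − 2/(1-q^k) ), where ∂³ℓ/∂p³ denotes the third derivative of ℓ(·, y) with respect to p. -/
/-!
Since `ℓ(·, y) = c·g + k·y·h` with `g t = log (1 - (1 - t)^k)` and `h t = log (1 - t)`, its third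
derivative is `c·g''' + k·y·h'''`, affine in `y`. The expectation therefore only needs the total
mass `1` and the mean `c·s/(1 - s)` of the negative binomial law with `s = q^k`; both come from
the series `∑ C(n+m, m) sⁿ = (1 - s)^-(m+1)`, with `n·C(n+m, m) = (m+1)·C(n+m, m+1)` for the mean.
-/

open Real Set Filter Topology

section ThirdDerivative

variable {𝕜 F : Type*} [NontriviallyNormedField 𝕜] [NormedAddCommGroup F] [NormedSpace 𝕜 F]

theorem iteratedDeriv_three_eq_of_hasDerivAt {f f₁ f₂ : 𝕜 → F} {s : Set 𝕜} {x : 𝕜} {a : F}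
    (hs : IsOpen s) (hx : x ∈ s) (h₁ : ∀ t ∈ s, HasDerivAt f (f₁ t) t)
    (h₂ : ∀ t ∈ s, HasDerivAt f₁ (f₂ t) t) (h₃ : HasDerivAt f₂ a x) :
    iteratedDeriv 3 f x = a := by
  have hf : ∀ t ∈ s, deriv f =ᶠ[𝓝 t] f₁ := fun t ht ↦
    eventually_of_mem (hs.mem_nhds ht) fun u hu ↦ (h₁ u hu).deriv
  have hf₁ : deriv (deriv f) =ᶠ[𝓝 x] f₂ :=
    eventually_of_mem (hs.mem_nhds hx) fun t ht ↦ (hf t ht).deriv_eq.trans (h₂ t ht).deriv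
  rw [iteratedDeriv_eq_iterate]
  exact hf₁.deriv_eq.trans h₃.deriv

end ThirdDerivative

section Derivatives

variable {k : ℕ} {t : ℝ}

theorem hasDerivAt_one_sub_pow (k : ℕ) (hq : 1 - t ≠ 0) :
    HasDerivAt (fun t : ℝ ↦ (1 - t) ^ k) (-(k * (1 - t) ^ k / (1 - t))) t := by
  refine (((hasDerivAt_id t).const_sub 1).fun_pow k).congr_deriv ?_
  rcases k with _ | k
  · simp
  · simp only [id, Nat.add_sub_cancel, pow_succ]
    field_simp

theorem hasDerivAt_log_one_sub_pow (hq : 1 - t ≠ 0) (hs : (1 - t) ^ k ≠ 1) :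
    HasDerivAt (fun t ↦ log (1 - (1 - t) ^ k))
      (k * (1 - t) ^ k / ((1 - t) * (1 - (1 - t) ^ k))) t := by
  have hs' : 1 - (1 - t) ^ k ≠ 0 := sub_ne_zero.2 hs.symm
  refine (((hasDerivAt_one_sub_pow k hq).const_sub 1).log hs').congr_deriv ?_
  field_simp

theorem hasDerivAt_deriv_log_one_sub_pow (hq : 1 - t ≠ 0) (hs : (1 - t) ^ k ≠ 1) :
    HasDerivAt (fun t : ℝ ↦ k * (1 - t) ^ k / ((1 - t) * (1 - (1 - t) ^ k)))
      (-(k * (1 - t) ^ k * (k - 1 + (1 - t) ^ k) / ((1 - t) ^ 2 * (1 - (1 - t) ^ k) ^ 2))) t := by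
  have hs' : 1 - (1 - t) ^ k ≠ 0 := sub_ne_zero.2 hs.symm
  have hd := hasDerivAt_one_sub_pow k hq
  refine ((hd.const_mul (k : ℝ)).div (((hasDerivAt_id t).const_sub 1).mul (hd.const_sub 1))
    (mul_ne_zero hq hs')).congr_deriv ?_
  simp only [id, Pi.mul_apply]
  generalize (1 - t) ^ k = s at *
  field_simp
  ring

theorem hasDerivAt_deriv2_log_one_sub_pow (hq : 1 - t ≠ 0) (hs : (1 - t) ^ k ≠ 1) :
    HasDerivAt (fun t : ℝ ↦
        -(k * (1 - t) ^ k * (k - 1 + (1 - t) ^ k) / ((1 - t) ^ 2 * (1 - (1 - t) ^ k) ^ 2)))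
      (k * (1 - t) ^ k * ((k - 1) * (k - 2) + (k - 1) * (k + 4) * (1 - t) ^ k +
        2 * ((1 - t) ^ k) ^ 2) / ((1 - t) ^ 3 * (1 - (1 - t) ^ k) ^ 3)) t := by
  have hs' : 1 - (1 - t) ^ k ≠ 0 := sub_ne_zero.2 hs.symm
  have hd := hasDerivAt_one_sub_pow k hq
  have hq' := (hasDerivAt_id t).const_sub 1
  refine ((((hd.const_mul (k : ℝ)).mul (hd.const_add ((k : ℝ) - 1))).div
    ((hq'.fun_pow 2).mul ((hd.const_sub 1).fun_pow 2))
    (mul_ne_zero (pow_ne_zero 2 hq) (pow_ne_zero 2 hs'))).neg).congr_deriv ?_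
  simp only [id, Pi.mul_apply]
  generalize (1 - t) ^ k = s at *
  field_simp
  ring

theorem hasDerivAt_log_one_sub (hq : 1 - t ≠ 0) :
    HasDerivAt (fun t ↦ log (1 - t)) (-1 / (1 - t)) t :=
  ((hasDerivAt_id t).const_sub 1).log hq

theorem hasDerivAt_deriv_log_one_sub (hq : 1 - t ≠ 0) :
    HasDerivAt (fun t : ℝ ↦ -1 / (1 - t)) (-1 / (1 - t) ^ 2) t := by
  refine ((hasDerivAt_const t (-1 : ℝ)).div ((hasDerivAt_id t).const_sub 1) hq).congr_deriv ?_
  simp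

theorem hasDerivAt_deriv2_log_one_sub (hq : 1 - t ≠ 0) :
    HasDerivAt (fun t : ℝ ↦ -1 / (1 - t) ^ 2) (-2 / (1 - t) ^ 3) t := by
  refine ((hasDerivAt_const t (-1 : ℝ)).div (((hasDerivAt_id t).const_sub 1).fun_pow 2)
    (pow_ne_zero 2 hq)).congr_deriv ?_
  simp only [id]
  field_simp
  ring

end Derivatives

theorem iteratedDeriv_three_logLikelihood {k : ℕ} (hk : k ≠ 0) (c a : ℝ) {p : ℝ}
    (hp : p ∈ Ioo (0 : ℝ) 1) :
    iteratedDeriv 3 (fun t ↦ c * log (1 - (1 - t) ^ k) + a * log (1 - t)) p =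
      c * (k * (1 - p) ^ k * ((k - 1) * (k - 2) + (k - 1) * (k + 4) * (1 - p) ^ k +
        2 * ((1 - p) ^ k) ^ 2) / ((1 - p) ^ 3 * (1 - (1 - p) ^ k) ^ 3)) +
      a * (-2 / (1 - p) ^ 3) := by
  have hq : ∀ t ∈ Ioo (0 : ℝ) 1, 1 - t ≠ 0 := fun t ht ↦ by linarith [ht.2]
  have hs : ∀ t ∈ Ioo (0 : ℝ) 1, (1 - t) ^ k ≠ 1 := fun t ht ↦
    (pow_lt_one₀ (by linarith [ht.2]) (by linarith [ht.1]) hk).ne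
  exact iteratedDeriv_three_eq_of_hasDerivAt isOpen_Ioo hp
    (fun t ht ↦ ((hasDerivAt_log_one_sub_pow (hq t ht) (hs t ht)).const_mul c).add
      ((hasDerivAt_log_one_sub (hq t ht)).const_mul a))
    (fun t ht ↦ ((hasDerivAt_deriv_log_one_sub_pow (hq t ht) (hs t ht)).const_mul c).add
      ((hasDerivAt_deriv_log_one_sub (hq t ht)).const_mul a))
    (((hasDerivAt_deriv2_log_one_sub_pow (hq p hp) (hs p hp)).const_mul c).add
      ((hasDerivAt_deriv2_log_one_sub (hq p hp)).const_mul a))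

section NegativeBinomial

variable {𝕜 : Type*} [NormedField 𝕜] {r : 𝕜}

theorem one_sub_ne_zero_of_norm_lt_one (hr : ‖r‖ < 1) : 1 - r ≠ 0 :=
  sub_ne_zero.2 fun h ↦ by simp [← h] at hr

theorem hasSum_nat_mul_choose_mul_geometric (m : ℕ) (hr : ‖r‖ < 1) :
    HasSum (fun n ↦ n * (n + m).choose m * r ^ n) ((m + 1) * r / (1 - r) ^ (m + 2)) := by
  have h := (hasSum_choose_mul_geometric_of_norm_lt_one (m + 1) hr).mul_left ((m + 1) * r)
  rw [← mul_div_assoc, mul_one] at h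
  have hshift (n : ℕ) : ((n + 1 : ℕ) : 𝕜) * (n + 1 + m).choose m * r ^ (n + 1) =
      (m + 1) * r * ((n + (m + 1)).choose (m + 1) * r ^ n) := by
    have hc : (n + 1) * (n + 1 + m).choose m = (m + 1) * (n + (m + 1)).choose (m + 1) := by
      have := Nat.choose_succ_right_eq (n + 1 + m) m
      rw [Nat.add_sub_cancel] at this
      rw [show n + (m + 1) = n + 1 + m by ring]
      linarith
    have hc' := congrArg (Nat.cast : ℕ → 𝕜) hc
    push_cast at hc' ⊢
    rw [pow_succ]
    linear_combination r ^ n * r * hc'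
  simpa using HasSum.zero_add (f := fun n : ℕ ↦ (n : 𝕜) * (n + m).choose m * r ^ n)
    (h.congr_fun hshift)

theorem hasSum_choose_mul_one_sub_pow_mul_geometric (m : ℕ) (hr : ‖r‖ < 1) :
    HasSum (fun n ↦ (n + m).choose m * (1 - r) ^ (m + 1) * r ^ n) 1 := by
  have h := (hasSum_choose_mul_geometric_of_norm_lt_one m hr).mul_left ((1 - r) ^ (m + 1))
  rw [mul_one_div_cancel (pow_ne_zero _ (one_sub_ne_zero_of_norm_lt_one hr))] at h
  exact h.congr_fun fun n ↦ by ring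

theorem hasSum_nat_mul_choose_mul_one_sub_pow_mul_geometric (m : ℕ) (hr : ‖r‖ < 1) :
    HasSum (fun n ↦ n * ((n + m).choose m * (1 - r) ^ (m + 1) * r ^ n))
      ((m + 1) * r / (1 - r)) := by
  have h1r := one_sub_ne_zero_of_norm_lt_one hr
  have h := (hasSum_nat_mul_choose_mul_geometric m hr).mul_left ((1 - r) ^ (m + 1))
  rw [show (1 - r) ^ (m + 1) * ((m + 1) * r / (1 - r) ^ (m + 2)) = (m + 1) * r / (1 - r) by
    field_simp; ring] at h
  exact h.congr_fun fun n ↦ by ring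

end NegativeBinomial

/-- Under model (b),
E[∂³ℓ/∂p³] = (ck/q³)·((k(k+1)q^k(1-q^k) + 2(kq^k+q^k-1)²)/(1-q^k)³ - 2/(1-q^k)),
where q = 1 - p and ℓ(p,y) = c·log(1-(1-p)^k) + k·y·log(1-p). -/
theorem stmt_13 (k c : ℕ) (hk : 1 ≤ k) (hc : 1 ≤ c) (p : ℝ)
    (hp : p ∈ Set.Ioo (0 : ℝ) 1) :
    HasSum (fun y : ℕ =>
      ((c + y - 1).choose y : ℝ) * (1 - (1 - p) ^ k) ^ c * (1 - p) ^ (k * y) *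
        iteratedDeriv 3
          (fun t : ℝ => c * Real.log (1 - (1 - t) ^ k) + k * y * Real.log (1 - t)) p)
      ((c : ℝ) * k / (1 - p) ^ 3 *
        (((k : ℝ) * (k + 1) * (1 - p) ^ k * (1 - (1 - p) ^ k) +
            2 * ((k : ℝ) * (1 - p) ^ k + (1 - p) ^ k - 1) ^ 2) / (1 - (1 - p) ^ k) ^ 3 -
          2 / (1 - (1 - p) ^ k))) := by
  obtain ⟨m, rfl⟩ : ∃ m, c = m + 1 := ⟨c - 1, by omega⟩
  have hq : 0 < 1 - p := sub_pos.2 hp.2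
  have hs : ‖(1 - p) ^ k‖ < 1 := by
    rw [norm_pow, Real.norm_of_nonneg hq.le]
    exact pow_lt_one₀ hq.le (by linarith [hp.1]) (by omega)
  set g₃ := (k : ℝ) * (1 - p) ^ k * ((k - 1) * (k - 2) + (k - 1) * (k + 4) * (1 - p) ^ k +
    2 * ((1 - p) ^ k) ^ 2) / ((1 - p) ^ 3 * (1 - (1 - p) ^ k) ^ 3)
  convert! ((hasSum_choose_mul_one_sub_pow_mul_geometric m hs).mul_right ((m + 1) * g₃)).add
    ((hasSum_nat_mul_choose_mul_one_sub_pow_mul_geometric m hs).mul_right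
      (k * (-2 / (1 - p) ^ 3))) using 1
  · funext y
    rw [iteratedDeriv_three_logLikelihood (by omega) _ _ hp, pow_mul,
      show m + 1 + y - 1 = y + m by omega, Nat.choose_symm_add]
    push_cast
    ring
  · have h1s := one_sub_ne_zero_of_norm_lt_one hs
    simp only [g₃]
    push_cast
    field_simp
    ring
end
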